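/- (Theorem 2, multi-view.) For v = 1, ..., V, let x_1^{(v)}, ..., x_N^{(v)} ∈ ℝ^{d_v} with data matrix X^{(v)} ∈ ℝ^{N×d_v} whose rows are (x_i^{(v)})ᵀ, and let D^{(v)} ∈ ℝ^{N×N} be given by D^{(v)}_{il} = ‖x_i^{(v)} − x_l^{(v)}‖². Let A_1, ..., A_C be a partition of {1,...,N} into nonempty clusters with indicator matrix Y and G = Y (Yᵀ Y)^{−1/2}. Then the infimum over all families of centroid matrices M^{(v)} ∈ ℝ^{d_v×C} of Σ_{v=1}^V ‖X^{(v)} − M^{(v)} Yᵀ‖_F² equals (1/2) Σ_{v=1}^V tr(Gᵀ D^{(v)} G), attained when each M^{(v)} has j-th column equal to the mean over A_j of the x_i^{(v)}. -/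

import Mathlib

/-!
With `G = Y (YᵀY)^{-1/2}`, the trace `tr (Gᵀ D G)` is `∑ⱼ Nⱼ⁻¹ ∑_{i, l ∈ Aⱼ} ‖xᵢ - xₗ‖²`, and the
pairwise sum over a cluster is `2 Nⱼ` times its scatter `∑_{i ∈ Aⱼ} ‖xᵢ - mⱼ‖²` about the mean `mⱼ`.
The objective splits over views and clusters into the scatters `∑_{i ∈ Aⱼ} ‖xᵢ - c‖²` about the
centroids `c`, and by the parallel-axis identity each of these exceeds the scatter about `mⱼ` by
`Nⱼ ‖c - mⱼ‖²`.
-/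

open Finset Matrix

section Mean

-- The hypothesis `#s • m = ∑ y` says `m` is the mean of `y` over `s`, and is harmless for `s = ∅`.
variable {ι E : Type*} [NormedAddCommGroup E] [InnerProductSpace ℝ E]
  {s : Finset ι} {y : ι → E} {m : E}

theorem Finset.sum_sub_eq_zero_of_card_smul_eq (hm : (#s : ℝ) • m = ∑ i ∈ s, y i) :
    ∑ i ∈ s, (y i - m) = 0 := by
  rw [sum_sub_distrib, sum_const, ← Nat.cast_smul_eq_nsmul ℝ, hm, sub_self]

theorem Finset.sum_norm_sub_sq_eq_add (hm : (#s : ℝ) • m = ∑ i ∈ s, y i) (c : E) :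
    ∑ i ∈ s, ‖y i - c‖ ^ 2 = ∑ i ∈ s, ‖y i - m‖ ^ 2 + #s * ‖c - m‖ ^ 2 := by
  have hsplit : ∀ i, ‖y i - c‖ ^ 2 =
      ‖y i - m‖ ^ 2 - 2 * inner ℝ (y i - m) (c - m) + ‖c - m‖ ^ 2 := fun i => by
    rw [← norm_sub_sq_real, sub_sub_sub_cancel_right]
  simp only [hsplit, sum_add_distrib, sum_sub_distrib, ← mul_sum, ← sum_inner,
    sum_sub_eq_zero_of_card_smul_eq hm, inner_zero_left, mul_zero, sub_zero, sum_const,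
    nsmul_eq_mul]

theorem Finset.sum_norm_sub_sq_le (hm : (#s : ℝ) • m = ∑ i ∈ s, y i) (c : E) :
    ∑ i ∈ s, ‖y i - m‖ ^ 2 ≤ ∑ i ∈ s, ‖y i - c‖ ^ 2 := by
  rw [sum_norm_sub_sq_eq_add hm c]
  exact le_add_of_nonneg_right (by positivity)

theorem Finset.sum_sum_norm_sub_sq_eq (hm : (#s : ℝ) • m = ∑ i ∈ s, y i) :
    ∑ i ∈ s, ∑ l ∈ s, ‖y i - y l‖ ^ 2 = 2 * #s * ∑ i ∈ s, ‖y i - m‖ ^ 2 := by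
  rw [sum_comm, sum_congr rfl fun l _ => sum_norm_sub_sq_eq_add hm (y l), sum_add_distrib,
    sum_const, nsmul_eq_mul, ← mul_sum]
  ring

end Mean

theorem Matrix.trace_transpose_mul_diagonal_mul_mul_diagonal {ι κ R : Type*} [Fintype ι]
    [Fintype κ] [DecidableEq κ] [CommSemiring R] (A : Matrix ι κ R) (D : Matrix ι ι R)
    (w : κ → R) :
    ((A * diagonal w)ᵀ * D * (A * diagonal w)).trace = ∑ j, w j ^ 2 * (Aᵀ * D * A) j j := by
  have hassoc : (A * diagonal w)ᵀ * D * (A * diagonal w) =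
      diagonal w * (Aᵀ * D * A) * diagonal w := by
    simp only [transpose_mul, diagonal_transpose, Matrix.mul_assoc]
  simp only [hassoc, trace, diag_apply, diagonal_mul, mul_diagonal]
  exact sum_congr rfl fun j _ => by ring

section ClusterIndicator

variable {ι κ : Type*} [DecidableEq κ] (a : ι → κ)

def clusterIndicator : Matrix ι κ ℝ := Matrix.of fun i j => if a i = j then 1 else 0

theorem transpose_clusterIndicator_mul_mul_apply [Fintype ι] (D : Matrix ι ι ℝ) (j j' : κ) :
    ((clusterIndicator a)ᵀ * D * clusterIndicator a) j j' =
      ∑ i ∈ {i | a i = j}, ∑ l ∈ {l | a l = j'}, D i l := by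
  simp only [clusterIndicator, mul_apply, transpose_apply, of_apply, ite_mul, one_mul, zero_mul,
    mul_ite, mul_one, mul_zero, ← sum_filter]
  exact Finset.sum_comm

theorem mul_transpose_clusterIndicator_apply [Fintype κ] {n : Type*} (M : Matrix n κ ℝ) (k : n)
    (i : ι) : (M * (clusterIndicator a)ᵀ) k i = M k (a i) := by
  simp [clusterIndicator, mul_apply]

theorem sum_sq_sub_mul_transpose_clusterIndicator [Fintype ι] [Fintype κ] {n : Type*} [Fintype n]
    (x : ι → EuclideanSpace ℝ n) (M : Matrix n κ ℝ) :
    ∑ k, ∑ i, (x i k - (M * (clusterIndicator a)ᵀ) k i) ^ 2 =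
      ∑ j, ∑ i ∈ {i | a i = j}, ‖x i - WithLp.toLp 2 (Mᵀ j)‖ ^ 2 := by
  rw [sum_comm, ← sum_fiberwise univ a]
  refine sum_congr rfl fun j _ => sum_congr rfl fun i hi => ?_
  simp only [mul_transpose_clusterIndicator_apply, (mem_filter.1 hi).2, EuclideanSpace.norm_sq_eq,
    PiLp.sub_apply, transpose_apply, Real.norm_eq_abs, sq_abs]

theorem half_trace_sqDist_clusterIndicator_eq [Fintype ι] [Fintype κ] {E : Type*}
    [NormedAddCommGroup E] [InnerProductSpace ℝ E] (x : ι → E) (m : κ → E)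
    (hm : ∀ j, (#{i | a i = j} : ℝ) • m j = ∑ i ∈ {i | a i = j}, x i) :
    1 / 2 * ((clusterIndicator a * diagonal fun j => (#{i | a i = j} : ℝ) ^ (-(1 / 2 : ℝ)))ᵀ *
        of (fun i l => ‖x i - x l‖ ^ 2) *
        (clusterIndicator a * diagonal fun j => (#{i | a i = j} : ℝ) ^ (-(1 / 2 : ℝ)))).trace =
      ∑ j, ∑ i ∈ {i | a i = j}, ‖x i - m j‖ ^ 2 := by
  rw [trace_transpose_mul_diagonal_mul_mul_diagonal, mul_sum]
  refine sum_congr rfl fun j _ => ?_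
  have hweight : ((#{i | a i = j} : ℝ) ^ (-(1 / 2 : ℝ))) ^ 2 = (#{i | a i = j} : ℝ)⁻¹ := by
    rw [← Real.rpow_mul_natCast (Nat.cast_nonneg _)]
    norm_num [Real.rpow_neg_one]
  rw [transpose_clusterIndicator_mul_mul_apply, hweight]
  simp only [of_apply]
  rw [sum_sum_norm_sub_sq_eq (hm j)]
  obtain hempty | hne := eq_empty_or_nonempty {i | a i = j}
  · simp [hempty]
  · have := hne.card_pos
    field_simp

end ClusterIndicator

theorem kmeans_multi_view_eq_trace_general (V N C : ℕ) (d : Fin V → ℕ)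
    (x : (v : Fin V) → Fin N → EuclideanSpace ℝ (Fin (d v)))
    (a : Fin N → Fin C)
    (Y : Matrix (Fin N) (Fin C) ℝ)
    (hY : Y = Matrix.of fun i j => if a i = j then (1 : ℝ) else 0)
    (X : (v : Fin V) → Matrix (Fin N) (Fin (d v)) ℝ)
    (hX : ∀ v, X v = Matrix.of fun i k => x v i k)
    (D : Fin V → Matrix (Fin N) (Fin N) ℝ)
    (hD : ∀ v, D v = Matrix.of fun i l => ‖x v i - x v l‖ ^ 2)
    (Nsize : Fin C → ℕ)
    (hsize : ∀ j, Nsize j = (Finset.univ.filter fun i => a i = j).card)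
    (G : Matrix (Fin N) (Fin C) ℝ)
    (hG : G = Y * Matrix.diagonal (fun j => (Nsize j : ℝ) ^ (-(1 / 2 : ℝ))))
    (M₀ : (v : Fin V) → Matrix (Fin (d v)) (Fin C) ℝ)
    (hM₀ : ∀ v, M₀ v = Matrix.of fun k j =>
      (∑ i ∈ Finset.univ.filter fun i => a i = j, x v i k) / (Nsize j : ℝ)) :
    (∀ M : (v : Fin V) → Matrix (Fin (d v)) (Fin C) ℝ,
        (1 / 2) * ∑ v, Matrix.trace (G.transpose * D v * G) ≤
          ∑ v, ∑ k, ∑ i, ((X v).transpose k i - (M v * Y.transpose) k i) ^ 2) ∧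
    ∑ v, ∑ k, ∑ i, ((X v).transpose k i - (M₀ v * Y.transpose) k i) ^ 2 =
      (1 / 2) * ∑ v, Matrix.trace (G.transpose * D v * G) := by
  simp only [hsize] at hG hM₀
  obtain rfl : Y = clusterIndicator a := hY
  have hcentroid : ∀ v j, (#{i | a i = j} : ℝ) • WithLp.toLp 2 ((M₀ v)ᵀ j) =
      ∑ i ∈ {i | a i = j}, x v i := by
    intro v j
    ext k
    simp [hM₀, ← expect_eq_sum_div_card]
  have hobj : ∀ v (M : Matrix (Fin (d v)) (Fin C) ℝ),
      ∑ k, ∑ i, ((X v)ᵀ k i - (M * (clusterIndicator a)ᵀ) k i) ^ 2 =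
        ∑ j, ∑ i ∈ {i | a i = j}, ‖x v i - WithLp.toLp 2 (Mᵀ j)‖ ^ 2 := fun v M => by
    rw [hX]
    exact sum_sq_sub_mul_transpose_clusterIndicator a (x v) M
  have htrace : ∀ v, 1 / 2 * (Gᵀ * D v * G).trace =
      ∑ j, ∑ i ∈ {i | a i = j}, ‖x v i - WithLp.toLp 2 ((M₀ v)ᵀ j)‖ ^ 2 := fun v => by
    rw [hG, hD]
    exact half_trace_sqDist_clusterIndicator_eq a (x v) _ (hcentroid v)
  refine ⟨fun M => ?_, ?_⟩
  · simp only [mul_sum, htrace, hobj]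
    exact sum_le_sum fun v _ => sum_le_sum fun j _ => sum_norm_sub_sq_le (hcentroid v j) _
  · simp only [mul_sum, htrace, hobj]

/-- Theorem 2, multi-view: for multi-view data
`x^{(v)}_1, …, x^{(v)}_N ∈ ℝ^{d_v}` (`v = 1, …, V`) partitioned into nonempty
clusters with indicator matrix `Y`, distance matrices
`D^{(v)}_{il} = ‖x^{(v)}_i − x^{(v)}_l‖²` and `G = Y (YᵀY)^{-1/2}`, the minimum
over families of centroid matrices `M^{(v)} ∈ ℝ^{d_v×C}` of
`∑ v, ‖X^{(v)ᵀ} − M^{(v)} Yᵀ‖_F²` equals `(1/2) ∑ v, tr(Gᵀ D^{(v)} G)`,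
attained when the `j`-th column of `M^{(v)}` is the mean of cluster `A_j`
in view `v`. -/
theorem kmeans_multi_view_eq_trace (V N C : ℕ) (d : Fin V → ℕ)
    (x : (v : Fin V) → Fin N → EuclideanSpace ℝ (Fin (d v)))
    (a : Fin N → Fin C) (ha : Function.Surjective a)
    (Y : Matrix (Fin N) (Fin C) ℝ)
    (hY : Y = Matrix.of fun i j => if a i = j then (1 : ℝ) else 0)
    (X : (v : Fin V) → Matrix (Fin N) (Fin (d v)) ℝ)
    (hX : ∀ v, X v = Matrix.of fun i k => x v i k)
    (D : Fin V → Matrix (Fin N) (Fin N) ℝ)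
    (hD : ∀ v, D v = Matrix.of fun i l => ‖x v i - x v l‖ ^ 2)
    (Nsize : Fin C → ℕ)
    (hsize : ∀ j, Nsize j = (Finset.univ.filter fun i => a i = j).card)
    (G : Matrix (Fin N) (Fin C) ℝ)
    (hG : G = Y * Matrix.diagonal (fun j => (Nsize j : ℝ) ^ (-(1 / 2 : ℝ))))
    (M₀ : (v : Fin V) → Matrix (Fin (d v)) (Fin C) ℝ)
    (hM₀ : ∀ v, M₀ v = Matrix.of fun k j =>
      (∑ i ∈ Finset.univ.filter fun i => a i = j, x v i k) / (Nsize j : ℝ)) :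
    (∀ M : (v : Fin V) → Matrix (Fin (d v)) (Fin C) ℝ,
        (1 / 2) * ∑ v, Matrix.trace (G.transpose * D v * G) ≤
          ∑ v, ∑ k, ∑ i, ((X v).transpose k i - (M v * Y.transpose) k i) ^ 2) ∧
    ∑ v, ∑ k, ∑ i, ((X v).transpose k i - (M₀ v * Y.transpose) k i) ^ 2 =
      (1 / 2) * ∑ v, Matrix.trace (G.transpose * D v * G) :=
  kmeans_multi_view_eq_trace_general V N C d x a Y hY X hX D hD Nsize hsize G hG M₀ hM₀
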